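/- Let h : [a,b] → (X, d_X) be a map into a metric space. Suppose that for every k ∈ {0,...,m−1} and every dyadic subinterval I of [a,b] of generation k, ∂_h^(2)(a(I), b(I)) ≤ ε², where ∂_h^(2)(x,y) = (1/2)[(d(h(x),h((x+y)/2))/((y−x)/2))² + (d(h((x+y)/2),h(y))/((y−x)/2))²] − (d(h(x),h(y))/(y−x))². Then for all integers 0 ≤ s < t ≤ 2^m: |d_X(h(a + s·2^{−m}(b−a)), h(a + t·2^{−m}(b−a))) − (t−s)·2^{−m}·d_X(h(a), h(b))| ≤ 4^{m−1}·(b−a)·ε. -/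

import Mathlib

/-!
Bisecting an interval whose midpoint defect is at most `ε²` changes each of the two half-step
distances by at most `ε` times the interval length from half the full distance: this is the
numerical convexity lemma applied to the rescaled distances. Iterating over `m` generations,
every step of the `2^{-m}`-grid has length within `2mε(b-a)/2^m` of `d(h a, h b)/2^m`. Summing
steps bounds `d(h x_s, h x_t)` from above; the triangle inequality through `h a` and `h b`, with
the complementary stretches bounded the same way, bounds it from below.
-/

/-- The midpoint defect `∂_h^(2)(x,y)` of a map `h : ℝ → X` into a metric space. -/
noncomputable def defect2 {X : Type*} [MetricSpace X] (h : ℝ → X) (x y : ℝ) : ℝ :=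
  (1 / 2) * ((dist (h x) (h ((x + y) / 2)) / ((y - x) / 2)) ^ 2
      + (dist (h ((x + y) / 2)) (h y) / ((y - x) / 2)) ^ 2)
    - (dist (h x) (h y) / (y - x)) ^ 2

theorem abs_sub_le_two_mul_of_sq_avg_sub_sq_le {α β γ ε : ℝ} (hγ : 0 ≤ γ) (hε : 0 ≤ ε)
    (hmid : γ ≤ (α + β) / 2) (hdef : (α ^ 2 + β ^ 2) / 2 - γ ^ 2 ≤ ε ^ 2) :
    |α - γ| ≤ 2 * ε ∧ |β - γ| ≤ 2 * ε := by
  -- `(α²+β²)/2 - γ² ≥ ((α+β)/2 - γ)² + ((α-β)/2)²` because `0 ≤ γ ≤ (α+β)/2`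
  have hμ : ((α + β) / 2 - γ) ^ 2 ≤ ε ^ 2 := by nlinarith [sq_nonneg (α - β)]
  have hαβ : (α - β) ^ 2 ≤ (2 * ε) ^ 2 := by nlinarith [sq_nonneg (α + β)]
  have hμ' := abs_le_of_sq_le_sq' hμ hε
  have hαβ' := abs_le_of_sq_le_sq' hαβ (by positivity)
  constructor <;> rw [abs_le] <;> constructor <;> linarith [hμ'.1, hμ'.2, hαβ'.1, hαβ'.2]

section Midpoint

variable {X : Type*} [MetricSpace X] (h : ℝ → X) {x y ε : ℝ}

theorem abs_dist_midpoint_sub_half_le (hxy : x < y) (hε : 0 ≤ ε)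
    (hdef : defect2 h x y ≤ ε ^ 2) :
    |dist (h x) (h ((x + y) / 2)) - dist (h x) (h y) / 2| ≤ ε * (y - x) ∧
      |dist (h ((x + y) / 2)) (h y) - dist (h x) (h y) / 2| ≤ ε * (y - x) := by
  unfold defect2 at hdef
  set p := dist (h x) (h ((x + y) / 2))
  set q := dist (h ((x + y) / 2)) (h y)
  set r := dist (h x) (h y)
  have hℓ : 0 < (y - x) / 2 := by linarith
  have hmid : r / (y - x) ≤ (p / ((y - x) / 2) + q / ((y - x) / 2)) / 2 := by
    rw [← add_div, div_div, div_mul_cancel₀ _ two_ne_zero]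
    gcongr
    exact dist_triangle _ _ _
  obtain ⟨hp, hq⟩ := abs_sub_le_two_mul_of_sq_avg_sub_sq_le
    (div_nonneg dist_nonneg (by linarith)) hε hmid (by linarith)
  have hrescale : ∀ u, |u - r / 2| = |u / ((y - x) / 2) - r / (y - x)| * ((y - x) / 2) :=
    fun u => by
      rw [← abs_of_pos hℓ, ← abs_mul, abs_of_pos hℓ]
      congr 1
      field_simp [(by linarith : y - x ≠ 0)]
  rw [hrescale p, hrescale q]
  constructor <;> nlinarith

end Midpoint

noncomputable def dyadicPoint (a b : ℝ) (k i : ℕ) : ℝ := a + i * ((b - a) / 2 ^ k)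

namespace dyadicPoint

variable {a b : ℝ} {k : ℕ}

theorem zero : dyadicPoint a b k 0 = a := by simp [dyadicPoint]

theorem two_pow : dyadicPoint a b k (2 ^ k) = b := by
  simp only [dyadicPoint]; push_cast; field_simp; ring

theorem add_one_sub_self (i : ℕ) :
    dyadicPoint a b k (i + 1) - dyadicPoint a b k i = (b - a) / 2 ^ k := by
  simp only [dyadicPoint]; push_cast; ring

theorem succ_two_mul (j : ℕ) : dyadicPoint a b (k + 1) (2 * j) = dyadicPoint a b k j := by
  simp only [dyadicPoint]; push_cast; rw [pow_succ]; field_simp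

theorem succ_two_mul_add_one (j : ℕ) :
    dyadicPoint a b (k + 1) (2 * j + 1)
      = (dyadicPoint a b k j + dyadicPoint a b k (j + 1)) / 2 := by
  simp only [dyadicPoint]; push_cast; rw [pow_succ]; field_simp; ring

end dyadicPoint

section Grid

variable {X : Type*} [MetricSpace X] (h : ℝ → X) {a b ε : ℝ}

theorem exists_abs_dist_dyadicPoint_sub_half_le (hab : a < b) (hε : 0 ≤ ε) {k i : ℕ}
    (hi : i < 2 ^ (k + 1))
    (hdef : ∀ j < 2 ^ k, defect2 h (dyadicPoint a b k j) (dyadicPoint a b k (j + 1)) ≤ ε ^ 2) :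
    ∃ j < 2 ^ k, |dist (h (dyadicPoint a b (k + 1) i)) (h (dyadicPoint a b (k + 1) (i + 1)))
        - dist (h (dyadicPoint a b k j)) (h (dyadicPoint a b k (j + 1))) / 2|
      ≤ ε * ((b - a) / 2 ^ k) := by
  obtain ⟨j, hij⟩ := Nat.even_or_odd' i
  have hj : j < 2 ^ k := by rw [pow_succ] at hi; omega
  have hlt : dyadicPoint a b k j < dyadicPoint a b k (j + 1) := by
    have := dyadicPoint.add_one_sub_self (a := a) (b := b) (k := k) j
    linarith [div_pos (sub_pos.2 hab) (pow_pos two_pos k)]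
  have halves := abs_dist_midpoint_sub_half_le h hlt hε (hdef j hj)
  rw [dyadicPoint.add_one_sub_self] at halves
  refine ⟨j, hj, ?_⟩
  rcases hij with rfl | rfl
  · rw [dyadicPoint.succ_two_mul, dyadicPoint.succ_two_mul_add_one]
    exact halves.1
  · rw [dyadicPoint.succ_two_mul_add_one, show 2 * j + 1 + 1 = 2 * (j + 1) by ring,
      dyadicPoint.succ_two_mul]
    exact halves.2

theorem abs_dist_dyadicPoint_add_one_sub_le (hab : a < b) (hε : 0 ≤ ε) {k : ℕ}
    (hdef : ∀ l < k, ∀ j < 2 ^ l,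
      defect2 h (dyadicPoint a b l j) (dyadicPoint a b l (j + 1)) ≤ ε ^ 2)
    {i : ℕ} (hi : i < 2 ^ k) :
    |dist (h (dyadicPoint a b k i)) (h (dyadicPoint a b k (i + 1))) - dist (h a) (h b) / 2 ^ k|
      ≤ 2 * k * ε * ((b - a) / 2 ^ k) := by
  induction k generalizing i with
  | zero =>
    obtain rfl : i = 0 := by simpa using hi
    simp [dyadicPoint]
  | succ k ih =>
    obtain ⟨j, hj, hhalf⟩ :=
      exists_abs_dist_dyadicPoint_sub_half_le h hab hε hi (hdef k k.lt_succ_self)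
    have hparent := ih (fun l hl => hdef l (by omega)) hj
    rw [abs_le] at hhalf hparent ⊢
    rw [pow_succ, ← div_div, ← div_div]
    push_cast
    constructor <;> linarith [hhalf.1, hhalf.2, hparent.1, hparent.2]

end Grid

section Chain

variable {α : Type*} [PseudoMetricSpace α] (f : ℕ → α) {N : ℕ}

theorem dist_le_mul_of_dist_succ_le {C : ℝ} (hstep : ∀ i < N, dist (f i) (f (i + 1)) ≤ C)
    {u v : ℕ} (huv : u ≤ v) (hv : v ≤ N) : dist (f u) (f v) ≤ ((v : ℝ) - u) * C :=
  calc dist (f u) (f v) ≤ ∑ i ∈ Finset.Ico u v, dist (f i) (f (i + 1)) :=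
        dist_le_Ico_sum_dist f huv
    _ ≤ (Finset.Ico u v).card • C :=
      Finset.sum_le_card_nsmul _ _ _ fun i hi => hstep i (by rw [Finset.mem_Ico] at hi; omega)
    _ = ((v : ℝ) - u) * C := by rw [Nat.card_Ico, nsmul_eq_mul, Nat.cast_sub huv]

theorem abs_dist_sub_le_of_dist_succ_le {c δ : ℝ} (hδ : 0 ≤ δ)
    (hstep : ∀ i < N, dist (f i) (f (i + 1)) ≤ c + δ) (hends : dist (f 0) (f N) = N * c)
    {u v : ℕ} (huv : u < v) (hv : v ≤ N) :
    |dist (f u) (f v) - ((v : ℝ) - u) * c| ≤ ((N : ℝ) - 1) * δ := by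
  have hmiddle := dist_le_mul_of_dist_succ_le f hstep huv.le hv
  have hleft := dist_le_mul_of_dist_succ_le f hstep (Nat.zero_le u) (huv.le.trans hv)
  have hright := dist_le_mul_of_dist_succ_le f hstep hv le_rfl
  have htri := dist_triangle4 (f 0) (f u) (f v) (f N)
  have huv' : (u : ℝ) + 1 ≤ v := by exact_mod_cast huv
  rw [abs_le]
  constructor
  · -- `N c = dist (f 0) (f N)`, and the complementary stretches `[0, u]`, `[v, N]` have
    -- at most `N - 1` steps
    push_cast at hleft
    nlinarith [mul_le_mul_of_nonneg_right (by linarith : (N : ℝ) - v + u ≤ N - 1) hδ]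
  · rcases (show v + 1 ≤ u + N ∨ (u = 0 ∧ v = N) by omega) with hlt | ⟨rfl, rfl⟩
    · have hlt' : (v : ℝ) + 1 ≤ u + N := by exact_mod_cast hlt
      nlinarith [mul_le_mul_of_nonneg_right (by linarith : (v : ℝ) - u ≤ N - 1) hδ]
    · rw [hends, Nat.cast_zero, sub_zero, sub_self]
      exact mul_nonneg (sub_nonneg.2 (by exact_mod_cast huv)) hδ

end Chain

theorem two_pow_sub_one_mul_le (m : ℕ) :
    ((2 : ℝ) ^ m - 1) * (2 * m) ≤ 4 ^ (m - 1) * 2 ^ m := by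
  cases m with
  | zero => norm_num
  | succ n =>
    have hn : (n : ℝ) + 1 ≤ 2 ^ n := by exact_mod_cast Nat.lt_two_pow_self
    have h4 : (4 : ℝ) ^ n = 2 ^ n * 2 ^ n := by rw [← mul_pow]; norm_num
    rw [Nat.add_sub_cancel, h4, pow_succ]
    push_cast
    nlinarith [mul_le_mul_of_nonneg_left hn (by linarith : (0 : ℝ) ≤ 2 * 2 ^ n - 1),
      mul_nonneg (by linarith : (0 : ℝ) ≤ 2 ^ n) (sq_nonneg ((2 : ℝ) ^ n - 1))]

theorem metric_energy_lemma_general {X : Type*} [MetricSpace X] (h : ℝ → X)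
    (a b ε : ℝ) (hab : a < b) (hε : 0 ≤ ε) (m : ℕ)
    (hdef : ∀ k < m, ∀ i < 2 ^ k,
      defect2 h (a + (i : ℝ) * ((b - a) / 2 ^ k)) (a + ((i : ℝ) + 1) * ((b - a) / 2 ^ k)) ≤ ε ^ 2) :
    ∀ s t : ℕ, s < t → t ≤ 2 ^ m →
      |dist (h (a + (s : ℝ) * ((b - a) / 2 ^ m))) (h (a + (t : ℝ) * ((b - a) / 2 ^ m)))
          - ((t : ℝ) - (s : ℝ)) / 2 ^ m * dist (h a) (h b)|
        ≤ 4 ^ (m - 1) * (b - a) * ε := by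
  intro s t hst ht
  have hdef' : ∀ l < m, ∀ j < 2 ^ l,
      defect2 h (dyadicPoint a b l j) (dyadicPoint a b l (j + 1)) ≤ ε ^ 2 := fun l hl j hj => by
    simpa [dyadicPoint] using hdef l hl j (by exact_mod_cast hj)
  set δ := 2 * m * ε * ((b - a) / 2 ^ m)
  have hstep : ∀ i < 2 ^ m, dist (h (dyadicPoint a b m i)) (h (dyadicPoint a b m (i + 1)))
      ≤ dist (h a) (h b) / 2 ^ m + δ := fun i hi => by
    linarith [(abs_le.1 (abs_dist_dyadicPoint_add_one_sub_le h hab hε hdef' hi)).2]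
  have hends : dist (h (dyadicPoint a b m 0)) (h (dyadicPoint a b m (2 ^ m)))
      = ((2 ^ m : ℕ) : ℝ) * (dist (h a) (h b) / 2 ^ m) := by
    rw [dyadicPoint.zero, dyadicPoint.two_pow]; push_cast; field_simp
  have hchain := abs_dist_sub_le_of_dist_succ_le (fun i => h (dyadicPoint a b m i))
    (by positivity) hstep hends hst ht
  rw [div_mul_eq_mul_div, mul_div_assoc]
  refine hchain.trans ?_
  push_cast
  calc ((2 : ℝ) ^ m - 1) * δ = ((2 ^ m - 1) * (2 * m)) * (ε * (b - a) / 2 ^ m) := by ring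
    _ ≤ (4 ^ (m - 1) * 2 ^ m) * (ε * (b - a) / 2 ^ m) :=
      mul_le_mul_of_nonneg_right (two_pow_sub_one_mul_le m)
        (div_nonneg (mul_nonneg hε (sub_nonneg.2 hab.le)) (by positivity))
    _ = 4 ^ (m - 1) * (b - a) * ε := by field_simp

/-- Metric-space energy lemma: if the midpoint defect of `h` is at most `ε²` on every
dyadic subinterval of `[a,b]` of generation `k ∈ {0,...,m−1}`, then `h` is within
`4^{m−1}(b−a)ε` of a constant-speed geodesic on the `2^{−m}`-grid of `[a,b]`. -/
theorem metric_energy_lemma {X : Type*} [MetricSpace X] (h : ℝ → X)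
    (a b ε : ℝ) (hab : a < b) (hε : 0 ≤ ε) (m : ℕ) (hm : 1 ≤ m)
    (hdef : ∀ k < m, ∀ i < 2 ^ k,
      defect2 h (a + (i : ℝ) * ((b - a) / 2 ^ k)) (a + ((i : ℝ) + 1) * ((b - a) / 2 ^ k)) ≤ ε ^ 2) :
    ∀ s t : ℕ, s < t → t ≤ 2 ^ m →
      |dist (h (a + (s : ℝ) * ((b - a) / 2 ^ m))) (h (a + (t : ℝ) * ((b - a) / 2 ^ m)))
          - ((t : ℝ) - (s : ℝ)) / 2 ^ m * dist (h a) (h b)|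
        ≤ 4 ^ (m - 1) * (b - a) * ε :=
  metric_energy_lemma_general h a b ε hab hε m hdef
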